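/- arXiv:0912.5182 — 5 statements merged into one kernel-verified Lean document; each statement's English description precedes it below -/
import Mathlib

section
/- Let U be a finite set, v ∈ U, t : U → ℝ, and Γ ⊆ ℝ^U a nonempty closed convex set such that for every x ∈ ℝ there exists s ∈ Γ with s v = x. Define Ẽ(x) = inf { ∑_{u ∈ U} (s u - t u)^2 | s ∈ Γ, s v = x }. Then Ẽ is strictly convex: for x ≠ y and α ∈ (0,1), Ẽ(αx + (1-α)y) < α Ẽ(x) + (1-α) Ẽ(y). -/
/-!
On the slice `{s ∈ Γ | s v = x}` (closed, nonempty) the coercive function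
`s ↦ ∑ u, (s u - t u) ^ 2` attains its infimum `Ẽ x` at some `m x`. For `x ≠ y` the convex
combination `α • m x + (1 - α) • m y` lies on the slice over `α x + (1 - α) y`, so `Ẽ` there is at
most its objective value; and since `m x ≠ m y` (their `v`-coordinates are `x ≠ y`), strict
convexity of the objective makes that value strictly smaller than `α Ẽ x + (1 - α) Ẽ y`.
-/

open Filter Set

section Marginal

variable {E : Type*} [AddCommGroup E] [Module ℝ E] {Γ : Set E} {φ : E →ₗ[ℝ] ℝ} {f : E → ℝ}

lemma StrictConvexOn.sInf_fiber (hf : StrictConvexOn ℝ Γ f)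
    (hmin : ∀ x, ∃ m ∈ Γ, φ m = x ∧ ∀ s ∈ Γ, φ s = x → f m ≤ f s) :
    StrictConvexOn ℝ univ fun x => sInf {e | ∃ s ∈ Γ, φ s = x ∧ e = f s} := by
  have hval : ∀ x, ∃ m ∈ Γ, φ m = x ∧ IsLeast {e | ∃ s ∈ Γ, φ s = x ∧ e = f s} (f m) := by
    intro x
    obtain ⟨m, hmΓ, hmx, hle⟩ := hmin x
    exact ⟨m, hmΓ, hmx, ⟨m, hmΓ, hmx, rfl⟩, by rintro _ ⟨s, hs, hsx, rfl⟩; exact hle s hs hsx⟩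
  refine ⟨convex_univ, fun x _ y _ hxy α β hα hβ hαβ => ?_⟩
  obtain ⟨a, haΓ, hax, ha⟩ := hval x
  obtain ⟨b, hbΓ, hby, hb⟩ := hval y
  obtain ⟨c, -, -, hc⟩ := hval (α • x + β • y)
  have hab : a ≠ b := by rintro rfl; exact hxy (hax.symm.trans hby)
  have hcomb : α • a + β • b ∈ Γ := hf.1 haΓ hbΓ hα.le hβ.le hαβ
  have hφ : φ (α • a + β • b) = α • x + β • y := by simp [hax, hby]
  dsimp only
  rw [ha.csInf_eq, hb.csInf_eq, hc.csInf_eq]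
  calc f c ≤ f (α • a + β • b) := hc.2 ⟨_, hcomb, hφ, rfl⟩
    _ < α • f a + β • f b := hf.2 haΓ hbΓ hab hα hβ hαβ

end Marginal

section SumSq

variable {U : Type*} [Fintype U]

lemma strictConvexOn_sum_sq_sub (t : U → ℝ) :
    StrictConvexOn ℝ univ fun s : U → ℝ => ∑ u, (s u - t u) ^ 2 := by
  refine ⟨convex_univ, fun a _ b _ hab α β hα hβ hαβ => ?_⟩
  obtain ⟨w, hw⟩ := Function.ne_iff.1 hab
  simp only [Pi.add_apply, Pi.smul_apply, smul_eq_mul, Finset.mul_sum, ← Finset.sum_add_distrib]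
  have hβ' : β = 1 - α := by linarith
  subst hβ'
  -- `α (p - r)² + (1 - α) (q - r)² - (α p + (1 - α) q - r)² = α (1 - α) (p - q)²`
  apply Finset.sum_lt_sum
  · intro u _
    nlinarith [mul_nonneg (mul_pos hα hβ).le (sq_nonneg (a u - b u))]
  · refine ⟨w, Finset.mem_univ w, ?_⟩
    nlinarith [mul_pos (mul_pos hα hβ) (sq_pos_of_ne_zero (sub_ne_zero.2 hw))]

lemma dist_sq_le_sum_sq_sub (s t : U → ℝ) : dist s t ^ 2 ≤ ∑ u, (s u - t u) ^ 2 := by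
  have hsum : 0 ≤ ∑ u, (s u - t u) ^ 2 := Finset.sum_nonneg fun u _ => sq_nonneg _
  refine (Real.le_sqrt dist_nonneg hsum).1 ((dist_pi_le_iff (Real.sqrt_nonneg _)).2 fun u => ?_)
  rw [Real.dist_eq]
  exact Real.abs_le_sqrt (Finset.single_le_sum (f := fun i => (s i - t i) ^ 2)
    (fun i _ => sq_nonneg _) (Finset.mem_univ u))

lemma tendsto_sum_sq_sub_cocompact (t : U → ℝ) :
    Tendsto (fun s : U → ℝ => ∑ u, (s u - t u) ^ 2) (cocompact (U → ℝ)) atTop :=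
  tendsto_atTop_mono (fun s => dist_sq_le_sum_sq_sub s t)
    ((tendsto_pow_atTop two_ne_zero).comp (tendsto_dist_right_cocompact_atTop t))

lemma IsClosed.exists_isMinOn_sum_sq_sub {S : Set (U → ℝ)} (hS : IsClosed S) (hne : S.Nonempty)
    (t : U → ℝ) : ∃ m ∈ S, IsMinOn (fun s : U → ℝ => ∑ u, (s u - t u) ^ 2) S m := by
  obtain ⟨s₀, hs₀⟩ := hne
  have hcont : Continuous fun s : U → ℝ => ∑ u, (s u - t u) ^ 2 := by fun_prop
  exact hcont.continuousOn.exists_isMinOn' hS hs₀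
    (((tendsto_sum_sq_sub_cocompact t).eventually_ge_atTop _).filter_mono inf_le_left)

end SumSq

theorem stmt_4_general {U : Type*} [Fintype U] (v : U) (t : U → ℝ) (Γ : Set (U → ℝ))
    (hclosed : IsClosed Γ) (hconv : Convex ℝ Γ)
    (hsurj : ∀ x : ℝ, ∃ s ∈ Γ, s v = x)
    (Etil : ℝ → ℝ)
    (hE : ∀ x, Etil x = sInf {E : ℝ | ∃ s ∈ Γ, s v = x ∧ E = ∑ u, (s u - t u) ^ 2}) :
    ∀ x y : ℝ, x ≠ y → ∀ α : ℝ, 0 < α → α < 1 →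
      Etil (α * x + (1 - α) * y) < α * Etil x + (1 - α) * Etil y := by
  have hmin : ∀ x, ∃ m ∈ Γ, m v = x ∧
      ∀ s ∈ Γ, s v = x → ∑ u, (m u - t u) ^ 2 ≤ ∑ u, (s u - t u) ^ 2 := by
    intro x
    obtain ⟨s, hs, hsx⟩ := hsurj x
    obtain ⟨m, ⟨hmΓ, hmx⟩, hm⟩ := (hclosed.inter (isClosed_eq (continuous_apply v)
      continuous_const)).exists_isMinOn_sum_sq_sub ⟨s, hs, hsx⟩ t
    exact ⟨m, hmΓ, hmx, fun s hs hsx => hm ⟨hs, hsx⟩⟩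
  have hstrict := ((strictConvexOn_sum_sq_sub t).subset (subset_univ Γ) hconv).sInf_fiber
    (φ := LinearMap.proj v) hmin
  intro x y hxy α hα hα1
  rw [funext hE]
  simpa using hstrict.2 (mem_univ x) (mem_univ y) hxy hα (sub_pos.2 hα1) (by ring)

theorem stmt_4 {U : Type*} [Fintype U] (v : U) (t : U → ℝ) (Γ : Set (U → ℝ))
    (hne : Γ.Nonempty) (hclosed : IsClosed Γ) (hconv : Convex ℝ Γ)
    (hsurj : ∀ x : ℝ, ∃ s ∈ Γ, s v = x)
    (Etil : ℝ → ℝ)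
    (hE : ∀ x, Etil x = sInf {E : ℝ | ∃ s ∈ Γ, s v = x ∧ E = ∑ u, (s u - t u) ^ 2}) :
    ∀ x y : ℝ, x ≠ y → ∀ α : ℝ, 0 < α → α < 1 →
      Etil (α * x + (1 - α) * y) < α * Etil x + (1 - α) * Etil y :=
  stmt_4_general v t Γ hclosed hconv hsurj Etil hE
end

section
/- Let E : ℝ → ℝ be strictly convex and continuous with minimizer s*, γ ≥ 0, and t ∈ ℝ. Define E'(x) = (x - t)^2 + min_{y ∈ [x-γ, x]} E(y). Then E' is strictly convex and continuous. -/
/-!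
A convex function `f` with global minimizer `s` decreases up to `s` and increases after it, so its
minimum on `[x - γ, x]` is attained at the projection `max (x - γ) (min x s)` of `s` onto that
window. Hence the window minimum is continuous in `x`. It is also convex: a convex combination of
the window minimizers of `x` and `y` lies in the window of the same combination of `x` and `y`.
Adding the strictly convex `(x - t) ^ 2` gives strict convexity.
-/

open Set

lemma strictConvexOn_sub_sq (t : ℝ) : StrictConvexOn ℝ univ fun x : ℝ => (x - t) ^ 2 := by
  simpa [Function.comp_def, sub_eq_add_neg] using
    (Even.strictConvexOn_pow even_two two_ne_zero).translate_left (-t)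

namespace ConvexOn

variable {f : ℝ → ℝ} {s : ℝ}

lemma monotoneOn_Ici_of_forall_le (hf : ConvexOn ℝ univ f) (hs : ∀ y, f s ≤ f y) :
    MonotoneOn f (Ici s) := by
  intro a ha b _ hab
  rcases (mem_Ici.1 ha).eq_or_lt with rfl | hsa
  · exact hs b
  · exact hf.le_right_of_left_le'' (mem_univ s) (mem_univ b) hsa hab (hs a)

lemma antitoneOn_Iic_of_forall_le (hf : ConvexOn ℝ univ f) (hs : ∀ y, f s ≤ f y) :
    AntitoneOn f (Iic s) := by
  intro a _ b hb hab
  rcases (mem_Iic.1 hb).eq_or_lt with rfl | hbs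
  · exact hs a
  · exact hf.le_left_of_right_le'' (mem_univ a) (mem_univ s) hab hbs (hs b)

lemma isLeast_image_Icc_max_min (hf : ConvexOn ℝ univ f) (hs : ∀ y, f s ≤ f y) {a b : ℝ}
    (hab : a ≤ b) : IsLeast (f '' Icc a b) (f (max a (min b s))) := by
  refine ⟨mem_image_of_mem f ⟨le_max_left _ _, max_le hab (min_le_left _ _)⟩, ?_⟩
  rintro _ ⟨y, ⟨hay, hyb⟩, rfl⟩
  rcases le_total s a with hsa | has
  · rw [min_eq_right (hsa.trans hab), max_eq_left hsa]
    exact hf.monotoneOn_Ici_of_forall_le hs hsa (hsa.trans hay) hay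
  rcases le_total b s with hbs | hsb
  · rw [min_eq_left hbs, max_eq_right hab]
    exact hf.antitoneOn_Iic_of_forall_le hs (hyb.trans hbs) hbs hyb
  · rw [min_eq_right hsb, max_eq_right has]
    exact hs y

variable {γ : ℝ}

lemma sInf_image_Icc_sub_self (hf : ConvexOn ℝ univ f) (hs : ∀ y, f s ≤ f y) (hγ : 0 ≤ γ)
    (x : ℝ) : sInf (f '' Icc (x - γ) x) = f (max (x - γ) (min x s)) :=
  (hf.isLeast_image_Icc_max_min hs (by linarith)).csInf_eq

lemma convexOn_sInf_image_Icc_sub_self (hf : ConvexOn ℝ univ f) (hs : ∀ y, f s ≤ f y)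
    (hγ : 0 ≤ γ) : ConvexOn ℝ univ fun x => sInf (f '' Icc (x - γ) x) := by
  refine ⟨convex_univ, fun x _ y _ a b ha hb hab => ?_⟩
  set m : ℝ → ℝ := fun x => max (x - γ) (min x s)
  have hm : ∀ x, m x ∈ Icc (x - γ) x := fun x =>
    ⟨le_max_left _ _, max_le (by linarith) (min_le_left _ _)⟩
  have hmem : a * m x + b * m y ∈ Icc (a * x + b * y - γ) (a * x + b * y) := by
    obtain ⟨hx₁, hx₂⟩ := hm x
    obtain ⟨hy₁, hy₂⟩ := hm y
    constructor <;> nlinarith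
  simp only [smul_eq_mul, hf.sInf_image_Icc_sub_self hs hγ]
  calc f (m (a * x + b * y))
      ≤ f (a * m x + b * m y) :=
        (hf.isLeast_image_Icc_max_min hs (by linarith)).2 (mem_image_of_mem f hmem)
    _ ≤ a * f (m x) + b * f (m y) := hf.2 (mem_univ _) (mem_univ _) ha hb hab

lemma continuous_sInf_image_Icc_sub_self (hf : ConvexOn ℝ univ f) (hcont : Continuous f)
    (hs : ∀ y, f s ≤ f y) (hγ : 0 ≤ γ) : Continuous fun x => sInf (f '' Icc (x - γ) x) := by
  simp only [hf.sInf_image_Icc_sub_self hs hγ]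
  fun_prop

end ConvexOn

theorem stmt_7 (E : ℝ → ℝ) (hconv : StrictConvexOn ℝ Set.univ E)
    (hcont : Continuous E) (sstar : ℝ) (hmin : ∀ y, E sstar ≤ E y)
    (γ : ℝ) (hγ : 0 ≤ γ) (t : ℝ) :
    StrictConvexOn ℝ Set.univ
        (fun x : ℝ => (x - t) ^ 2 + sInf (E '' Set.Icc (x - γ) x)) ∧
      Continuous (fun x : ℝ => (x - t) ^ 2 + sInf (E '' Set.Icc (x - γ) x)) :=
  ⟨(strictConvexOn_sub_sq t).add_convexOn
      (hconv.convexOn.convexOn_sInf_image_Icc_sub_self hmin hγ),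
    (by fun_prop : Continuous fun x : ℝ => (x - t) ^ 2).add
      (hconv.convexOn.continuous_sInf_image_Icc_sub_self hcont hmin hγ)⟩
end

section
/- Let P be the directed path on vertices v_1, …, v_n with arcs (v_i, v_{i+1}), let t : {1,…,n} → ℝ, γ ≥ 0, and let s be the unique minimizer of ∑_i (s_i - t_i)^2 over the set Γ = {s | ∀ i < n, s_i ≤ s_{i+1} ≤ s_i + γ}. Suppose s_{i+1}, …, s_n are fixed to their optimal values and s*_i is the unique minimizer of Ẽ_i(x) = min{∑_{j ≤ i}(z_j - t_j)^2 | z ∈ Γ_i, z_i = x} (Γ_i the constraint set on the prefix). Then s_i = s*_i if s*_i ∈ [s_{i+1} - γ, s_{i+1}], s_i = s_{i+1} - γ if s*_i < s_{i+1} - γ, and s_i = s_{i+1} if s*_i > s_{i+1}. -/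
/-!
`Ẽ_i` is `2`-strongly convex: mixing two feasible prefixes keeps feasibility (the constraint set
is convex) and lowers the squared-distance cost by `a b ‖z - w‖²`, which survives the infimum.
Gluing any feasible prefix that ends in `[s_{i+1} - γ, s_{i+1}]` to the optimal tail of `s` shows
that `s_i` minimizes `Ẽ_i` over that interval, and the minimizer of a strictly convex function over
an interval is the projection of its global minimizer onto it.
-/

open Set

/-- The paper's `Γ_m`; entries outside `[1, m]` are unconstrained. -/
def lipIsotoneSet (γ : ℝ) (m : ℕ) : Set (ℕ → ℝ) :=
  {z | ∀ j, 1 ≤ j → j < m → z j ≤ z (j + 1) ∧ z (j + 1) ≤ z j + γ}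

def prefixCost (t z : ℕ → ℝ) (m : ℕ) : ℝ :=
  ∑ j ∈ Finset.Icc 1 m, (z j - t j) ^ 2

noncomputable def prefixEnergy (t : ℕ → ℝ) (γ : ℝ) (i : ℕ) (x : ℝ) : ℝ :=
  sInf {e | ∃ z ∈ lipIsotoneSet γ i, z i = x ∧ e = prefixCost t z i}

section LipIsotoneSet

variable {γ : ℝ}

theorem lipIsotoneSet_anti : Antitone (lipIsotoneSet γ) :=
  fun _ _ hmm' _ hz j hj hjm => hz j hj (hjm.trans_le hmm')

theorem const_mem_lipIsotoneSet (hγ : 0 ≤ γ) (x : ℝ) (m : ℕ) :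
    (fun _ => x) ∈ lipIsotoneSet γ m :=
  fun _ _ _ => ⟨le_rfl, le_add_of_nonneg_right hγ⟩

theorem convex_lipIsotoneSet (m : ℕ) : Convex ℝ (lipIsotoneSet γ m) := by
  intro z hz w hw a b ha hb hab j hj hjm
  obtain ⟨hz₁, hz₂⟩ := hz j hj hjm
  obtain ⟨hw₁, hw₂⟩ := hw j hj hjm
  simp only [Pi.add_apply, Pi.smul_apply, smul_eq_mul]
  constructor
  · gcongr
  · linear_combination a * hz₂ + b * hw₂ + γ * hab

theorem piecewise_mem_lipIsotoneSet {i n : ℕ} {z s : ℕ → ℝ} (hz : z ∈ lipIsotoneSet γ i)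
    (hs : s ∈ lipIsotoneSet γ n) (hlo : s (i + 1) - γ ≤ z i) (hhi : z i ≤ s (i + 1)) :
    (fun j => if j ≤ i then z j else s j) ∈ lipIsotoneSet γ n := by
  intro j hj hjn
  rcases lt_trichotomy j i with hji | rfl | hji
  · simpa [hji.le, Nat.succ_le_of_lt hji] using hz j hj hji
  · simpa using ⟨hhi, by linarith⟩
  · simpa [hji.not_ge, (hji.trans (Nat.lt_succ_self j)).not_ge] using hs j hj hjn

end LipIsotoneSet

section PrefixCost

variable (t : ℕ → ℝ)

theorem prefixCost_nonneg (z : ℕ → ℝ) (m : ℕ) : 0 ≤ prefixCost t z m := by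
  unfold prefixCost
  positivity

theorem prefixCost_eq_add {i n : ℕ} (z : ℕ → ℝ) (hin : i ≤ n) :
    prefixCost t z n = prefixCost t z i + ∑ j ∈ Finset.Ioc i n, (z j - t j) ^ 2 := by
  have hIcc : ∀ m, Finset.Icc 1 m = Finset.Ioc 0 m := Finset.Icc_add_one_left_eq_Ioc 0
  simp only [prefixCost, hIcc]
  rw [Finset.sum_Ioc_consecutive _ (Nat.zero_le i) hin]

theorem prefixCost_smul_add_smul (z w : ℕ → ℝ) (m : ℕ) {a b : ℝ} (hab : a + b = 1) :
    prefixCost t (a • z + b • w) m = a * prefixCost t z m + b * prefixCost t w m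
      - a * b * ∑ j ∈ Finset.Icc 1 m, (z j - w j) ^ 2 := by
  obtain rfl : b = 1 - a := by linarith
  simp only [prefixCost, Finset.mul_sum, ← Finset.sum_add_distrib, ← Finset.sum_sub_distrib]
  refine Finset.sum_congr rfl fun j _ => ?_
  simp only [Pi.add_apply, Pi.smul_apply, smul_eq_mul]
  ring

end PrefixCost

section PrefixEnergy

variable (t : ℕ → ℝ) {γ : ℝ} {i : ℕ}

theorem prefixEnergy_le {z : ℕ → ℝ} (hz : z ∈ lipIsotoneSet γ i) :
    prefixEnergy t γ i (z i) ≤ prefixCost t z i :=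
  csInf_le ⟨0, by rintro _ ⟨w, -, -, rfl⟩; exact prefixCost_nonneg t w i⟩ ⟨z, hz, rfl, rfl⟩

theorem le_prefixEnergy (hγ : 0 ≤ γ) {x c : ℝ}
    (h : ∀ z ∈ lipIsotoneSet γ i, z i = x → c ≤ prefixCost t z i) :
    c ≤ prefixEnergy t γ i x := by
  refine le_csInf ⟨_, fun _ => x, const_mem_lipIsotoneSet hγ x i, rfl, rfl⟩ ?_
  rintro _ ⟨z, hz, hzi, rfl⟩
  exact h z hz hzi

theorem exists_prefixCost_lt (hγ : 0 ≤ γ) (x : ℝ) {ε : ℝ} (hε : 0 < ε) :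
    ∃ z ∈ lipIsotoneSet γ i, z i = x ∧ prefixCost t z i < prefixEnergy t γ i x + ε := by
  have hne : {e | ∃ z ∈ lipIsotoneSet γ i, z i = x ∧ e = prefixCost t z i}.Nonempty :=
    ⟨_, fun _ => x, const_mem_lipIsotoneSet hγ x i, rfl, rfl⟩
  obtain ⟨_, ⟨z, hz, hzi, rfl⟩, hlt⟩ := Real.lt_sInf_add_pos hne hε
  exact ⟨z, hz, hzi, hlt⟩

theorem strongConvexOn_prefixEnergy (hγ : 0 ≤ γ) (hi : 1 ≤ i) :
    StrongConvexOn univ 2 (prefixEnergy t γ i) := by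
  refine ⟨convex_univ, fun x _ y _ a b ha hb hab => ?_⟩
  simp only [smul_eq_mul, Real.norm_eq_abs, sq_abs]
  rw [div_self two_ne_zero, one_mul]
  refine le_of_forall_pos_le_add fun ε hε => ?_
  obtain ⟨z, hz, rfl, hzε⟩ := exists_prefixCost_lt t (i := i) hγ x hε
  obtain ⟨w, hw, rfl, hwε⟩ := exists_prefixCost_lt t (i := i) hγ y hε
  have hdist : (z i - w i) ^ 2 ≤ ∑ j ∈ Finset.Icc 1 i, (z j - w j) ^ 2 :=
    Finset.single_le_sum (f := fun j => (z j - w j) ^ 2) (fun _ _ => sq_nonneg _)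
      (Finset.mem_Icc.mpr ⟨hi, le_rfl⟩)
  calc prefixEnergy t γ i (a * z i + b * w i)
      = prefixEnergy t γ i ((a • z + b • w) i) := rfl
    _ ≤ prefixCost t (a • z + b • w) i :=
        prefixEnergy_le t (convex_lipIsotoneSet i hz hw ha hb hab)
    _ = a * prefixCost t z i + b * prefixCost t w i
          - a * b * ∑ j ∈ Finset.Icc 1 i, (z j - w j) ^ 2 :=
        prefixCost_smul_add_smul t z w i hab
    _ ≤ a * (prefixEnergy t γ i (z i) + ε) + b * (prefixEnergy t γ i (w i) + ε)
          - a * b * (z i - w i) ^ 2 := by gcongr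
    _ = a * prefixEnergy t γ i (z i) + b * prefixEnergy t γ i (w i)
          - a * b * (z i - w i) ^ 2 + ε := by linear_combination ε * hab

end PrefixEnergy

theorem isMinOn_prefixEnergy_of_isMinOn {t s : ℕ → ℝ} {γ : ℝ} {i n : ℕ} (hγ : 0 ≤ γ)
    (hin : i < n) (hs : s ∈ lipIsotoneSet γ n)
    (hopt : IsMinOn (fun z => prefixCost t z n) (lipIsotoneSet γ n) s) :
    IsMinOn (prefixEnergy t γ i) (Icc (s (i + 1) - γ) (s (i + 1))) (s i) := by
  refine isMinOn_iff.mpr fun x ⟨hlo, hhi⟩ =>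
    (prefixEnergy_le t (lipIsotoneSet_anti hin.le hs)).trans (le_prefixEnergy t hγ fun z hz hzi => ?_)
  subst hzi
  set w : ℕ → ℝ := fun j => if j ≤ i then z j else s j
  have hw := isMinOn_iff.mp hopt w (piecewise_mem_lipIsotoneSet hz hs hlo hhi)
  have hprefix : prefixCost t w i = prefixCost t z i :=
    Finset.sum_congr rfl fun j hj => by simp [w, (Finset.mem_Icc.mp hj).2]
  have htail : ∑ j ∈ Finset.Ioc i n, (w j - t j) ^ 2 = ∑ j ∈ Finset.Ioc i n, (s j - t j) ^ 2 :=
    Finset.sum_congr rfl fun j hj => by simp [w, (Finset.mem_Ioc.mp hj).1.not_ge]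
  simp only [prefixCost_eq_add t _ hin.le, hprefix, htail] at hw
  linarith

section StrictConvex

variable {f : ℝ → ℝ} {m p q : ℝ}

theorem StrictConvexOn.lt_of_isMinOn_of_lt_of_lt (hf : StrictConvexOn ℝ univ f)
    (hm : IsMinOn f univ m) (hmq : m < q) (hqp : q < p) : f q < f p := by
  have hslope := hf.slope_strict_mono_adjacent (mem_univ m) (mem_univ p) hmq hqp
  have hleft : 0 ≤ (f q - f m) / (q - m) :=
    div_nonneg (sub_nonneg.mpr (isMinOn_univ_iff.mp hm q)) (sub_pos.mpr hmq).le
  have := hleft.trans_lt hslope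
  rw [div_pos_iff_of_pos_right (sub_pos.mpr hqp)] at this
  linarith

theorem StrictConvexOn.lt_of_isMinOn_of_lt_of_lt' (hf : StrictConvexOn ℝ univ f)
    (hm : IsMinOn f univ m) (hpq : p < q) (hqm : q < m) : f q < f p := by
  have hslope := hf.slope_strict_mono_adjacent (mem_univ p) (mem_univ m) hpq hqm
  have hright : (f m - f q) / (m - q) ≤ 0 :=
    div_nonpos_of_nonpos_of_nonneg (sub_nonpos.mpr (isMinOn_univ_iff.mp hm q)) (sub_pos.mpr hqm).le
  have := hslope.trans_le hright
  rw [div_lt_iff₀ (sub_pos.mpr hpq), zero_mul] at this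
  linarith

theorem StrictConvexOn.eq_left_of_isMinOn_Icc {a b : ℝ} (hf : StrictConvexOn ℝ univ f)
    (hm : IsMinOn f univ m) (hma : m < a) (hp : p ∈ Icc a b) (hpmin : IsMinOn f (Icc a b) p) :
    p = a := by
  by_contra hpa
  have hlt := hf.lt_of_isMinOn_of_lt_of_lt hm hma (lt_of_le_of_ne hp.1 (Ne.symm hpa))
  exact hlt.not_ge (hpmin ⟨le_rfl, hp.1.trans hp.2⟩)

theorem StrictConvexOn.eq_right_of_isMinOn_Icc {a b : ℝ} (hf : StrictConvexOn ℝ univ f)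
    (hm : IsMinOn f univ m) (hbm : b < m) (hp : p ∈ Icc a b) (hpmin : IsMinOn f (Icc a b) p) :
    p = b := by
  by_contra hpb
  have hlt := hf.lt_of_isMinOn_of_lt_of_lt' hm (lt_of_le_of_ne hp.2 hpb) hbm
  exact hlt.not_ge (hpmin ⟨hp.1.trans hp.2, le_rfl⟩)

end StrictConvex

theorem stmt_8 (n : ℕ) (t : ℕ → ℝ) (γ : ℝ) (hγ : 0 ≤ γ)
    (Γ : ℕ → Set (ℕ → ℝ))
    (hΓ : ∀ m, Γ m =
      {z : ℕ → ℝ | ∀ j, 1 ≤ j → j < m → z j ≤ z (j + 1) ∧ z (j + 1) ≤ z j + γ})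
    (s : ℕ → ℝ) (hs : s ∈ Γ n)
    (hopt : ∀ z ∈ Γ n,
      ∑ j ∈ Finset.Icc 1 n, (s j - t j) ^ 2 ≤ ∑ j ∈ Finset.Icc 1 n, (z j - t j) ^ 2)
    (i : ℕ) (h1 : 1 ≤ i) (hin : i < n)
    (Ei : ℝ → ℝ)
    (hEi : ∀ x, Ei x = sInf {e : ℝ | ∃ z ∈ Γ i, z i = x ∧
      e = ∑ j ∈ Finset.Icc 1 i, (z j - t j) ^ 2})
    (si : ℝ) (hmin : ∀ x, Ei si ≤ Ei x)
    (huniq : ∀ x, (∀ y, Ei x ≤ Ei y) → x = si) :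
    (s (i + 1) - γ ≤ si → si ≤ s (i + 1) → s i = si) ∧
    (si < s (i + 1) - γ → s i = s (i + 1) - γ) ∧
    (s (i + 1) < si → s i = s (i + 1)) := by
  obtain rfl : Γ = lipIsotoneSet γ := funext hΓ
  obtain rfl : Ei = prefixEnergy t γ i := funext hEi
  have hconv := (strongConvexOn_prefixEnergy t hγ h1).strictConvexOn two_pos
  have hsi : s i ∈ Icc (s (i + 1) - γ) (s (i + 1)) := by
    obtain ⟨hmono, hlip⟩ := hs i h1 hin
    exact ⟨by linarith, hmono⟩
  have hpmin := isMinOn_prefixEnergy_of_isMinOn hγ hin hs (isMinOn_iff.mpr hopt)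
  have hglobal : IsMinOn (prefixEnergy t γ i) univ si := isMinOn_univ_iff.mpr hmin
  refine ⟨fun hlo hhi => huniq _ fun y => (hpmin ⟨hlo, hhi⟩).trans (hmin y),
    fun hlt => hconv.eq_left_of_isMinOn_Icc hglobal hlt hsi hpmin,
    fun hlt => hconv.eq_right_of_isMinOn_Icc hglobal hlt hsi hpmin⟩
end

section
/- Let F : ℝ → ℝ be continuous, monotone nondecreasing, with exactly one zero s*, let γ ≥ 0, t ∈ ℝ, and define G(x) = 2(x - t) + F̂(x), where F̂(x) = F(x-γ) for x > s*+γ, F̂(x) = 0 on [s*, s*+γ], and F̂(x) = F(x) for x < s*. Then G is continuous, strictly increasing, and has exactly one zero. -/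
/-!
Writing `F̂ x = F (min x s*) + F (max (x - γ) s*)` (valid because `F s* = 0` and `γ ≥ 0`)
shows at once that `F̂` is continuous, nondecreasing and vanishes at `s*`. Adding the strictly
increasing term `2 (x - t)` gives a continuous strictly increasing `G`, which is `≤ 0` at
`min s* t` and `≥ 0` at `max s* t`; the intermediate value theorem gives the zero, strict
monotonicity its uniqueness.
-/

lemma ite_flat_eq_add_min_max (F : ℝ → ℝ) {s γ : ℝ} (hs : F s = 0) (hγ : 0 ≤ γ) (x : ℝ) :
    (if s + γ < x then F (x - γ) else if x < s then F x else 0) =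
      F (min x s) + F (max (x - γ) s) := by
  rcases lt_or_ge x s with hxs | hsx
  · rw [if_neg (by linarith), if_pos hxs, min_eq_left hxs.le, max_eq_right (by linarith), hs,
      add_zero]
  · rw [min_eq_right hsx, hs, zero_add, if_neg hsx.not_gt]
    by_cases hx : s + γ < x
    · rw [if_pos hx, max_eq_left (by linarith)]
    · rw [if_neg hx, max_eq_right (by linarith), hs]

lemma Monotone.add_min_max {F : ℝ → ℝ} (hF : Monotone F) (s γ : ℝ) :
    Monotone fun x => F (min x s) + F (max (x - γ) s) :=
  (hF.comp (monotone_id.min monotone_const)).add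
    (hF.comp (Monotone.max (fun _ _ h => sub_le_sub_right h γ) monotone_const))

section LinearPerturbation

variable {h : ℝ → ℝ}

lemma Monotone.strictMono_two_mul_sub_add (hm : Monotone h) (t : ℝ) :
    StrictMono fun x => 2 * (x - t) + h x :=
  StrictMono.add_monotone (fun _ _ hxy => by linarith) hm

lemma existsUnique_two_mul_sub_add_eq_zero (hc : Continuous h) (hm : Monotone h) {s : ℝ}
    (hs : h s = 0) (t : ℝ) : ∃! x, 2 * (x - t) + h x = 0 := by
  set G := fun x => 2 * (x - t) + h x
  have hneg : G (min s t) ≤ 0 := by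
    have : h (min s t) ≤ h s := hm (min_le_left s t)
    have : min s t ≤ t := min_le_right s t
    simp only [G]
    linarith
  have hpos : 0 ≤ G (max s t) := by
    have : h s ≤ h (max s t) := hm (le_max_left s t)
    have : t ≤ max s t := le_max_right s t
    simp only [G]
    linarith
  obtain ⟨x, hx⟩ := intermediate_value_univ (min s t) (max s t) (by fun_prop : Continuous G)
    ⟨hneg, hpos⟩
  exact ⟨x, hx, fun y hy => (hm.strictMono_two_mul_sub_add t).injective (hy.trans hx.symm)⟩

end LinearPerturbation

theorem stmt_10_general (F : ℝ → ℝ) (hcont : Continuous F) (hmono : Monotone F)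
    (sstar : ℝ) (hz : F sstar = 0)
    (γ : ℝ) (hγ : 0 ≤ γ) (t : ℝ)
    (G : ℝ → ℝ)
    (hG : ∀ x, G x = 2 * (x - t) +
      (if sstar + γ < x then F (x - γ) else if x < sstar then F x else 0)) :
    Continuous G ∧ StrictMono G ∧ ∃! x, G x = 0 := by
  obtain rfl : G = fun x => 2 * (x - t) + (F (min x sstar) + F (max (x - γ) sstar)) :=
    funext fun x => by rw [hG, ite_flat_eq_add_min_max F hz hγ]
  have hzero : F (min sstar sstar) + F (max (sstar - γ) sstar) = 0 := by
    rw [min_self, max_eq_right (by linarith), hz, add_zero]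
  exact ⟨by fun_prop, (hmono.add_min_max sstar γ).strictMono_two_mul_sub_add t,
    existsUnique_two_mul_sub_add_eq_zero (by fun_prop) (hmono.add_min_max sstar γ) hzero t⟩

theorem stmt_10 (F : ℝ → ℝ) (hcont : Continuous F) (hmono : Monotone F)
    (sstar : ℝ) (hz : F sstar = 0) (huniq : ∀ x, F x = 0 → x = sstar)
    (γ : ℝ) (hγ : 0 ≤ γ) (t : ℝ)
    (G : ℝ → ℝ)
    (hG : ∀ x, G x = 2 * (x - t) +
      (if sstar + γ < x then F (x - γ) else if x < sstar then F x else 0)) :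
    Continuous G ∧ StrictMono G ∧ ∃! x, G x = 0 :=
  stmt_10_general F hcont hmono sstar hz γ hγ t G hG
end

section
/- Let E₁, …, E_k : ℝ → ℝ be strictly convex continuous functions, each attaining a minimum, and let t ∈ ℝ, γ ≥ 0. Define E(x) = (x - t)^2 + ∑_{j=1}^k min_{y ∈ [x-γ, x]} E_j(y). Then E is strictly convex, continuous, and attains a unique minimum on ℝ. -/
/-!
If `y₁, y₂` realise the window minimum of a convex `f` at `x₁, x₂`, then `a y₁ + b y₂` lies in the
window `[a x₁ + b x₂ - γ, a x₁ + b x₂]`, so the window minimum is again convex, hence continuous.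
Adding the strictly convex `(x - t)²` to the finite sum of these window minima gives a strictly
convex function, which is coercive because each window minimum of `E j` is bounded below by the
minimum of `E j`. A continuous coercive function attains its minimum, and strict convexity makes
the minimiser unique.
-/

open Set Filter

noncomputable def windowMin (f : ℝ → ℝ) (γ x : ℝ) : ℝ :=
  sInf (f '' Icc (x - γ) x)

section windowMin

variable {f : ℝ → ℝ} {γ : ℝ}

theorem windowMin_le (hf : Continuous f) {x y : ℝ} (hy : y ∈ Icc (x - γ) x) :
    windowMin f γ x ≤ f y :=
  csInf_le (isCompact_Icc.image hf).bddBelow (mem_image_of_mem f hy)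

theorem le_windowMin (hγ : 0 ≤ γ) {c : ℝ} (hc : ∀ y, c ≤ f y) (x : ℝ) :
    c ≤ windowMin f γ x :=
  le_csInf ⟨f x, mem_image_of_mem f ⟨by linarith, le_rfl⟩⟩ (by rintro _ ⟨y, -, rfl⟩; exact hc y)

theorem exists_eq_windowMin (hf : Continuous f) (hγ : 0 ≤ γ) (x : ℝ) :
    ∃ y ∈ Icc (x - γ) x, f y = windowMin f γ x :=
  (isCompact_Icc.image hf).sInf_mem ⟨f x, mem_image_of_mem f ⟨by linarith, le_rfl⟩⟩

theorem ConvexOn.windowMin (hconv : ConvexOn ℝ univ f) (hf : Continuous f) (hγ : 0 ≤ γ) :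
    ConvexOn ℝ univ (_root_.windowMin f γ) := by
  refine ⟨convex_univ, fun x₁ _ x₂ _ a b ha hb hab => ?_⟩
  obtain ⟨y₁, hy₁, hfy₁⟩ := exists_eq_windowMin hf hγ x₁
  obtain ⟨y₂, hy₂, hfy₂⟩ := exists_eq_windowMin hf hγ x₂
  have hmem : a • y₁ + b • y₂ ∈ Icc (a • x₁ + b • x₂ - γ) (a • x₁ + b • x₂) := by
    simp only [smul_eq_mul]
    constructor <;> nlinarith [hy₁.1, hy₁.2, hy₂.1, hy₂.2]
  calc _ ≤ f (a • y₁ + b • y₂) := windowMin_le hf hmem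
    _ ≤ a • f y₁ + b • f y₂ := hconv.2 trivial trivial ha hb hab
    _ = _ := by rw [hfy₁, hfy₂]

theorem Continuous.windowMin (hf : Continuous f) (hconv : ConvexOn ℝ univ f) (hγ : 0 ≤ γ) :
    Continuous (_root_.windowMin f γ) :=
  continuousOn_univ.mp ((hconv.windowMin hf hγ).continuousOn isOpen_univ)

end windowMin

theorem convexOn_sum {𝕜 E β ι : Type*} [Semiring 𝕜] [PartialOrder 𝕜] [AddCommMonoid E]
    [AddCommMonoid β] [PartialOrder β] [IsOrderedAddMonoid β] [SMul 𝕜 E] [Module 𝕜 β]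
    {S : Set E} (hS : Convex 𝕜 S) (s : Finset ι) {f : ι → E → β}
    (hf : ∀ i ∈ s, ConvexOn 𝕜 S (f i)) :
    ConvexOn 𝕜 S (fun x => ∑ i ∈ s, f i x) := by
  classical
  induction s using Finset.induction_on with
  | empty => simpa using convexOn_const (0 : β) hS
  | insert i s hi ih =>
    simp only [Finset.sum_insert hi]
    exact (hf i (s.mem_insert_self i)).add (ih fun j hj => hf j (Finset.mem_insert_of_mem hj))

theorem tendsto_sq_sub_add_cocompact_atTop (t : ℝ) {g : ℝ → ℝ} {C : ℝ} (hg : ∀ x, C ≤ g x) :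
    Tendsto (fun x => (x - t) ^ 2 + g x) (cocompact ℝ) atTop := by
  have hsq := (tendsto_pow_atTop two_ne_zero).comp
    (tendsto_norm_cocompact_atTop.comp (Homeomorph.subRight t).map_cocompact.le)
  simp only [Function.comp_def, Homeomorph.subRight_apply, Real.norm_eq_abs, sq_abs] at hsq
  exact tendsto_atTop_add_right_of_le _ C hsq hg

theorem StrictConvexOn.existsUnique_forall_le {E : Type*} [TopologicalSpace E] [AddCommMonoid E]
    [Module ℝ E] [Nonempty E] {F : E → ℝ} (hconv : StrictConvexOn ℝ univ F) (hF : Continuous F)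
    (hcoer : Tendsto F (cocompact E) atTop) :
    ∃! x, ∀ y, F x ≤ F y := by
  obtain ⟨x, hx⟩ := hF.exists_forall_le hcoer
  exact ⟨x, hx, fun y hy => hconv.eq_of_isMinOn (fun z _ => hy z) (fun z _ => hx z) trivial trivial⟩

theorem stmt_18 (k : ℕ) (E : Fin k → ℝ → ℝ)
    (hconv : ∀ j, StrictConvexOn ℝ Set.univ (E j))
    (hcont : ∀ j, Continuous (E j))
    (hmin : ∀ j, ∃ m, ∀ y, E j m ≤ E j y)
    (t : ℝ) (γ : ℝ) (hγ : 0 ≤ γ) :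
    StrictConvexOn ℝ Set.univ
        (fun x : ℝ => (x - t) ^ 2 + ∑ j, sInf (E j '' Set.Icc (x - γ) x)) ∧
      Continuous
        (fun x : ℝ => (x - t) ^ 2 + ∑ j, sInf (E j '' Set.Icc (x - γ) x)) ∧
      ∃! x : ℝ, ∀ y : ℝ,
        (x - t) ^ 2 + ∑ j, sInf (E j '' Set.Icc (x - γ) x) ≤
          (y - t) ^ 2 + ∑ j, sInf (E j '' Set.Icc (y - γ) y) := by
  have hsq : StrictConvexOn ℝ univ (fun x : ℝ => (x - t) ^ 2) := by
    simpa [Function.comp_def, sub_eq_neg_add] using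
      (Even.strictConvexOn_pow even_two two_ne_zero).translate_right (-t)
  have hstrict := hsq.add_convexOn
    (convexOn_sum convex_univ Finset.univ fun j _ => (hconv j).convexOn.windowMin (hcont j) hγ)
  have hcontF : Continuous (fun x => (x - t) ^ 2 + ∑ j, windowMin (E j) γ x) :=
    (continuous_id.sub continuous_const).pow 2 |>.add <|
      continuous_finsetSum _ fun j _ => (hcont j).windowMin (hconv j).convexOn hγ
  choose m hm using hmin
  have hbdd : ∀ x, ∑ j, E j (m j) ≤ ∑ j, windowMin (E j) γ x := fun x =>
    Finset.sum_le_sum fun j _ => le_windowMin hγ (hm j) x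
  exact ⟨hstrict, hcontF, hstrict.existsUnique_forall_le hcontF
    (tendsto_sq_sub_add_cocompact_atTop t hbdd)⟩
end
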